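/- arXiv:1909.01445 — 2 statements merged into one kernel-verified Lean document; each statement's English description precedes it below -/
import Mathlib

section
/- Let X, U1, U2 be finite sets, c : X × U1 × U2 → ℝ a cost, and π ∈ Δ(X). Consider the Bayesian game where player 1 observes x ~ π and picks γ1 : X → Δ(U1), player 2 picks γ2 ∈ Δ(U2), and the payoff is c̃(π,γ1,γ2) = Σ_{x,u1,u2} π(x) γ1(x)(u1) γ2(u2) c(x,u1,u2). Then the game has a value: min_{γ1} max_{γ2} c̃ = max_{γ2} min_{γ1} c̃, and the value as a function of π is piecewise linear and convex (a maximum of finitely many linear functions of π). -/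
/-!
Write `pureCost c π γ1 : U2 → ℝ` for the costs of `γ1` against the pure actions of player 2. The
upper value is `min_{γ1} max_{u2} pureCost c π γ1 u2`; separating the convex set of these cost
vectors from the open orthant below the upper value produces a mixed action of player 2 that
guarantees it, so the game has a value.

Against a fixed `γ2`, player 1 best-replies state by state, so the lower value is
`max_{γ2} ∑ x, π x * min_{u1} 𝔼_{γ2} c x u1`. This is the maximum of `(γ2, y) ↦ ∑ x, π x * y x`
over a polytope that does not depend on `π`. The maximum is attained at a vertex, and there are
finitely many vertices, each being the only solution of the constraints tight at it. Hence the
value is the largest of the finitely many linear functions `π ↦ ∑ x, y x * π x` given by the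
vertices.
-/

/-- The probability simplex over a finite set. -/
def probSet (S : Type*) [Fintype S] : Set (S → ℝ) :=
  {p | (∀ s, 0 ≤ p s) ∧ ∑ s, p s = 1}

/-- Stochastic maps `X → Δ(U)`. -/
def prescSet (X U : Type*) [Fintype U] : Set (X → U → ℝ) :=
  {γ | ∀ x, (∀ u, 0 ≤ γ x u) ∧ ∑ u, γ x u = 1}

/-- Expected payoff of the stage Bayesian game:
`c̃(π,γ1,γ2) = Σ_{x,u1,u2} π(x) γ1(x)(u1) γ2(u2) c(x,u1,u2)`. -/
def bayesCost {X U1 U2 : Type*} [Fintype X] [Fintype U1] [Fintype U2]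
    (c : X → U1 → U2 → ℝ) (π : X → ℝ) (γ1 : X → U1 → ℝ) (γ2 : U2 → ℝ) : ℝ :=
  ∑ x, ∑ u1, ∑ u2, π x * γ1 x u1 * γ2 u2 * c x u1 u2

open Finset Filter Topology

section Polyhedron

variable {E : Type*} [AddCommGroup E] [Module ℝ E] {m : Type*}

def polyhedron (a : m → E →ₗ[ℝ] ℝ) (b : m → ℝ) : Set E := {z | ∀ i, a i z ≤ b i}

/-- Along a direction `d` that keeps the tight constraints tight, `y ± t • d` stays in the
polyhedron for small `t`, so `d = 0` by extremality. -/
theorem eq_of_mem_extremePoints_polyhedron [Finite m] {a : m → E →ₗ[ℝ] ℝ} {b : m → ℝ}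
    {y z : E} (hy : y ∈ (polyhedron a b).extremePoints ℝ) (hz : ∀ i, a i y = b i → a i z = b i) :
    z = y := by
  set d := z - y
  have hd : ∀ i, a i y = b i → a i d = 0 := fun i hi => by simp [d, hi, hz i hi]
  have hline : ∀ᶠ t in 𝓝 (0 : ℝ), y + t • d ∈ polyhedron a b := by
    refine eventually_all.2 fun i => ?_
    simp only [map_add, map_smul, smul_eq_mul]
    rcases (hy.1 i).eq_or_lt with hi | hi
    · exact .of_forall fun t => by rw [hd i hi, mul_zero, add_zero, hi]
    · have : Tendsto (fun t : ℝ => a i y + t * a i d) (𝓝 0) (𝓝 (a i y)) :=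
        (continuous_const.add (continuous_id.mul continuous_const)).tendsto' 0 _ (by simp)
      exact (this.eventually (eventually_lt_nhds hi)).mono fun _ => le_of_lt
  have hline' : ∀ᶠ t in 𝓝 (0 : ℝ), y + (-t) • d ∈ polyhedron a b :=
    (continuous_neg.tendsto' 0 0 neg_zero).eventually hline
  obtain ⟨t, ⟨htP, htP'⟩, ht⟩ :=
    ((hline.and hline').filter_mono nhdsWithin_le_nhds |>.and
      (self_mem_nhdsWithin : ∀ᶠ t in 𝓝[>] (0 : ℝ), 0 < t)).exists
  have hseg : y ∈ openSegment ℝ (y + t • d) (y + (-t) • d) :=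
    ⟨1 / 2, 1 / 2, by norm_num, by norm_num, by norm_num, by module⟩
  have htd : t • d = 0 := by simpa using hy.2 htP htP' hseg
  exact sub_eq_zero.1 ((smul_eq_zero.1 htd).resolve_left (ne_of_gt ht))

theorem finite_extremePoints_polyhedron [Finite m] (a : m → E →ₗ[ℝ] ℝ) (b : m → ℝ) :
    ((polyhedron a b).extremePoints ℝ).Finite := by
  refine Set.Finite.of_finite_image (f := fun y => {i | a i y = b i}) (Set.toFinite _) ?_
  intro y hy z hz hyz
  exact (eq_of_mem_extremePoints_polyhedron hy fun i hi => (Set.ext_iff.1 hyz i).1 hi).symm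

theorem isClosed_polyhedron [TopologicalSpace E] [IsTopologicalAddGroup E] [ContinuousSMul ℝ E]
    [T2Space E] [FiniteDimensional ℝ E] (a : m → E →ₗ[ℝ] ℝ) (b : m → ℝ) :
    IsClosed (polyhedron a b) := by
  simp only [polyhedron, Set.ofPred_forall]
  exact isClosed_iInter fun i => isClosed_le (a i).continuous_of_finiteDimensional continuous_const

end Polyhedron

theorem IsCompact.exists_mem_extremePoints_isMaxOn {E : Type*} [AddCommGroup E] [Module ℝ E]
    [TopologicalSpace E] [T2Space E] [IsTopologicalAddGroup E] [ContinuousSMul ℝ E]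
    [LocallyConvexSpace ℝ E] {s : Set E} (hs : IsCompact s) (hne : s.Nonempty) (l : E →L[ℝ] ℝ) :
    ∃ y ∈ s.extremePoints ℝ, IsMaxOn l s y := by
  obtain ⟨z, hzs, hz⟩ := hs.exists_isMaxOn hne l.continuous.continuousOn
  have h : IsExposed ℝ s {y ∈ s | ∀ w ∈ s, l w ≤ l y} := fun _ => ⟨l, rfl⟩
  obtain ⟨y, hy⟩ := (h.isCompact hs).extremePoints_nonempty ⟨z, hzs, hz⟩
  exact ⟨y, h.isExtreme.extremePoints_subset_extremePoints hy, (extremePoints_subset hy).2⟩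

section Simplex

variable {ι : Type*} [Fintype ι] {p : ι → ℝ}

theorem inf'_le_sum_mul_of_mem_stdSimplex [Nonempty ι] (hp : p ∈ stdSimplex ℝ ι) (g : ι → ℝ) :
    univ.inf' univ_nonempty g ≤ ∑ i, p i * g i :=
  calc univ.inf' univ_nonempty g = ∑ i, p i * univ.inf' univ_nonempty g := by
        rw [← sum_mul, hp.2, one_mul]
    _ ≤ ∑ i, p i * g i :=
        sum_le_sum fun i hi => mul_le_mul_of_nonneg_left (inf'_le g hi) (hp.1 i)

theorem sum_mul_le_sup'_of_mem_stdSimplex [Nonempty ι] (hp : p ∈ stdSimplex ℝ ι) (g : ι → ℝ) :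
    ∑ i, p i * g i ≤ univ.sup' univ_nonempty g :=
  calc ∑ i, p i * g i ≤ ∑ i, p i * univ.sup' univ_nonempty g :=
        sum_le_sum fun i hi => mul_le_mul_of_nonneg_left (le_sup' g hi) (hp.1 i)
    _ = univ.sup' univ_nonempty g := by rw [← sum_mul, hp.2, one_mul]

theorem ciSup_stdSimplex_sum_mul [Nonempty ι] (g : ι → ℝ) :
    ⨆ p : stdSimplex ℝ ι, ∑ i, p.1 i * g i = univ.sup' univ_nonempty g := by
  classical
  obtain ⟨j, -, hj⟩ := exists_mem_eq_sup' univ_nonempty g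
  have : Nonempty (stdSimplex ℝ ι) := ⟨⟨_, single_mem_stdSimplex ℝ j⟩⟩
  refine le_antisymm (ciSup_le fun p => sum_mul_le_sup'_of_mem_stdSimplex p.2 g) ?_
  refine le_ciSup_of_le ⟨_, Set.forall_mem_range.2 fun p => sum_mul_le_sup'_of_mem_stdSimplex p.2 g⟩
    ⟨_, single_mem_stdSimplex ℝ j⟩ ?_
  simp [hj, Pi.single_apply]

theorem nonneg_of_forall_sum_mul_lt {φ : ι → ℝ} {u v : ℝ}
    (h : ∀ z : ι → ℝ, (∀ i, z i < v) → ∑ i, z i * φ i < u) (i : ι) : 0 ≤ φ i := by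
  classical
  by_contra! hi
  set w := ∑ j, (v - 1) * φ j
  have hw : w < u := h _ fun _ => by linarith
  set t := (u - w) / -φ i
  have ht : 0 ≤ t := div_nonneg (by linarith) (by linarith)
  have hz := h (fun j => v - 1 - if j = i then t else 0) fun j => by split_ifs <;> linarith
  have : t * φ i = w - u := by
    have : φ i ≠ 0 := hi.ne
    simp only [t]
    field_simp
    ring
  simp [sub_mul, sum_sub_distrib, ite_mul, this, w] at hz

/-- Separating `K` from the open orthant `{z | ∀ i, z i < v}` gives a nonnegative functional,
which is normalised to a mixed strategy. -/
theorem exists_mem_stdSimplex_forall_le_sum_mul {K : Set (ι → ℝ)} (hK : Convex ℝ K)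
    (hKne : K.Nonempty) {v : ℝ} (hv : ∀ k ∈ K, ∃ i, v ≤ k i) :
    ∃ p ∈ stdSimplex ℝ ι, ∀ k ∈ K, v ≤ ∑ i, p i * k i := by
  classical
  set O : Set (ι → ℝ) := Set.univ.pi fun _ => Set.Iio v
  have hO : ∀ z, z ∈ O ↔ ∀ i, z i < v := by simp [O]
  have hdisj : Disjoint O K := Set.disjoint_left.2 fun z hzO hzK => by
    obtain ⟨i, hi⟩ := hv z hzK
    exact hi.not_gt ((hO z).1 hzO i)
  obtain ⟨f, u, hfO, hfK⟩ := geometric_hahn_banach_open (convex_pi fun _ _ => convex_Iio v)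
    (isOpen_set_pi Set.finite_univ fun _ _ => isOpen_Iio) hK hdisj
  set φ : ι → ℝ := fun i => f fun j => if i = j then 1 else 0
  have hf : ∀ z, f z = ∑ i, z i * φ i := fun z => by
    simpa using f.toLinearMap.pi_apply_eq_sum_univ z
  have hφO : ∀ z : ι → ℝ, (∀ i, z i < v) → ∑ i, z i * φ i < u := fun z hz =>
    hf z ▸ hfO z ((hO z).2 hz)
  have hφK : ∀ k ∈ K, u ≤ ∑ i, k i * φ i := fun k hk => hf k ▸ hfK k hk
  have hφ := nonneg_of_forall_sum_mul_lt hφO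
  set T := ∑ i, φ i
  have hT : 0 < T := by
    refine (sum_nonneg fun i _ => hφ i).lt_of_ne fun hT0 => ?_
    have hzero : φ = 0 := funext fun i =>
      (sum_eq_zero_iff_of_nonneg fun i _ => hφ i).1 hT0.symm i (mem_univ i)
    obtain ⟨k, hk⟩ := hKne
    have := (hφO (fun _ => v - 1) fun _ => by linarith).trans_le (hφK k hk)
    simp [hzero] at this
  refine ⟨fun i => φ i / T, ⟨fun i => div_nonneg (hφ i) hT.le, by rw [← sum_div, div_self hT.ne']⟩,
    fun k hk => ?_⟩
  by_contra! hlt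
  have hval : ∑ i, (∑ j, φ j / T * k j) * φ i = ∑ i, k i * φ i := by
    simp_rw [← mul_sum, div_mul_eq_mul_div, ← sum_div, mul_comm (k _)]
    exact div_mul_cancel₀ _ hT.ne'
  exact ((hφO _ fun _ => hlt).trans_le (hφK k hk)).ne hval

end Simplex

theorem prescSet_eq_pi (X U : Type*) [Fintype U] :
    prescSet X U = Set.univ.pi fun _ => stdSimplex ℝ U := by
  ext γ; simp [prescSet, stdSimplex]

instance {S : Type*} [Fintype S] [Nonempty S] : Nonempty (probSet S) := by
  classical
  exact ⟨⟨_, single_mem_stdSimplex ℝ (Classical.arbitrary S)⟩⟩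

instance {X U : Type*} [Fintype U] [Nonempty U] : Nonempty (prescSet X U) :=
  let p := Classical.arbitrary (probSet U)
  ⟨⟨fun _ => p, fun _ => p.2⟩⟩

section Game

variable {X U1 U2 : Type*} (c : X → U1 → U2 → ℝ)

section PureCost

variable [Fintype X] [Fintype U1]

def pureCost (π : X → ℝ) (γ1 : X → U1 → ℝ) (u2 : U2) : ℝ :=
  ∑ x, ∑ u1, π x * γ1 x u1 * c x u1 u2

theorem convex_image_pureCost (π : X → ℝ) : Convex ℝ (pureCost c π '' prescSet X U1) := by
  rw [prescSet_eq_pi]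
  refine (convex_pi fun _ _ => convex_stdSimplex ℝ U1).is_linear_image
    ⟨fun γ γ' => ?_, fun t γ => ?_⟩
  · ext u2
    simp [pureCost, mul_add, add_mul, sum_add_distrib]
  · ext u2
    simp only [pureCost, Pi.smul_apply, smul_eq_mul, mul_sum]
    exact sum_congr rfl fun _ _ => sum_congr rfl fun _ _ => by ring

end PureCost

variable [Fintype U2]

/-- Pairs `(p, y)` of a mixed action of player 2 and lower bounds `y x` on player 1's best-reply
cost in each state `x`; the bound `-M` only serves to make the set compact. -/
def replyPolytope (M : ℝ) : Set ((U2 → ℝ) × (X → ℝ)) :=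
  {z | z.1 ∈ stdSimplex ℝ U2 ∧ (∀ x u1, z.2 x ≤ ∑ u2, z.1 u2 * c x u1 u2) ∧ ∀ x, -M ≤ z.2 x}

theorem exists_replyPolytope_eq_polyhedron (M : ℝ) :
    ∃ (a : U2 ⊕ Unit ⊕ Unit ⊕ (X × U1) ⊕ X → (U2 → ℝ) × (X → ℝ) →ₗ[ℝ] ℝ)
      (b : U2 ⊕ Unit ⊕ Unit ⊕ (X × U1) ⊕ X → ℝ), replyPolytope c M = polyhedron a b := by
  let fst (u2 : U2) : (U2 → ℝ) × (X → ℝ) →ₗ[ℝ] ℝ := LinearMap.proj u2 ∘ₗ LinearMap.fst ℝ _ _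
  let snd (x : X) : (U2 → ℝ) × (X → ℝ) →ₗ[ℝ] ℝ := LinearMap.proj x ∘ₗ LinearMap.snd ℝ _ _
  refine ⟨Sum.elim (fun u2 => -fst u2) <| Sum.elim (fun _ => ∑ u2, fst u2) <|
      Sum.elim (fun _ => -∑ u2, fst u2) <|
      Sum.elim (fun xu => snd xu.1 - ∑ u2, c xu.1 xu.2 u2 • fst u2) fun x => -snd x,
    Sum.elim 0 <| Sum.elim 1 <| Sum.elim (-1) <| Sum.elim 0 fun _ => M, ?_⟩
  ext z
  simp [replyPolytope, polyhedron, stdSimplex, Sum.forall, fst, snd, le_antisymm_iff, and_assoc,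
    mul_comm (z.1 _), neg_le]

theorem replyPolytope_subset_Icc [Nonempty U1] [Nonempty U2] {M : ℝ}
    (hM : ∀ x u1 u2, c x u1 u2 ≤ M) :
    replyPolytope c M ⊆ Set.Icc (0, fun _ => -M) (1, fun _ => M) := by
  rintro ⟨p, y⟩ ⟨hp, hy, hyM⟩
  refine ⟨⟨hp.1, hyM⟩, fun u2 => (mem_Icc_of_mem_stdSimplex hp u2).2, fun x => ?_⟩
  obtain ⟨u1⟩ := ‹Nonempty U1›
  exact (hy x u1).trans <|
    (sum_mul_le_sup'_of_mem_stdSimplex hp _).trans (sup'_le _ _ fun u2 _ => hM x u1 u2)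

theorem isCompact_replyPolytope [Finite X] [Nonempty U1] [Nonempty U2] {M : ℝ}
    (hM : ∀ x u1 u2, c x u1 u2 ≤ M) : IsCompact (replyPolytope c M) := by
  obtain ⟨a, b, hab⟩ := exists_replyPolytope_eq_polyhedron c M
  exact isCompact_Icc.of_isClosed_subset (hab ▸ isClosed_polyhedron a b)
    (replyPolytope_subset_Icc c hM)

theorem finite_extremePoints_replyPolytope [Finite X] [Finite U1] (M : ℝ) :
    ((replyPolytope c M).extremePoints ℝ).Finite := by
  obtain ⟨a, b, hab⟩ := exists_replyPolytope_eq_polyhedron c M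
  exact hab ▸ finite_extremePoints_polyhedron a b

variable [Fintype U1]

noncomputable def bestReplyCost [Nonempty U1] (x : X) (γ2 : U2 → ℝ) : ℝ :=
  univ.inf' univ_nonempty fun u1 : U1 => ∑ u2, γ2 u2 * c x u1 u2

theorem mk_bestReplyCost_mem_replyPolytope [Nonempty U1] [Nonempty U2] {M : ℝ}
    (hM : ∀ x u1 u2, -M ≤ c x u1 u2) {p : U2 → ℝ} (hp : p ∈ stdSimplex ℝ U2) :
    (p, fun x => bestReplyCost c x p) ∈ replyPolytope c M :=
  ⟨hp, fun _ u1 => inf'_le _ (mem_univ u1), fun x => le_inf' univ_nonempty _ fun u1 _ =>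
    (le_inf' univ_nonempty _ fun u2 _ => hM x u1 u2).trans
      (inf'_le_sum_mul_of_mem_stdSimplex hp _)⟩

variable [Fintype X]

theorem bayesCost_eq_sum_pureCost (π : X → ℝ) (γ1 : X → U1 → ℝ) (γ2 : U2 → ℝ) :
    bayesCost c π γ1 γ2 = ∑ u2, γ2 u2 * pureCost c π γ1 u2 := by
  simp only [bayesCost, pureCost, mul_sum]
  rw [sum_congr rfl fun x _ => sum_comm, sum_comm]
  exact sum_congr rfl fun _ _ => sum_congr rfl fun _ _ => sum_congr rfl fun _ _ => by ring

theorem bayesCost_eq_sum_mul_sum (π : X → ℝ) (γ1 : X → U1 → ℝ) (γ2 : U2 → ℝ) :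
    bayesCost c π γ1 γ2 = ∑ x, π x * ∑ u1, γ1 x u1 * ∑ u2, γ2 u2 * c x u1 u2 := by
  simp only [bayesCost, mul_sum]
  exact sum_congr rfl fun _ _ => sum_congr rfl fun _ _ => sum_congr rfl fun _ _ => by ring

theorem ciSup_bayesCost [Nonempty U2] (π : X → ℝ) (γ1 : X → U1 → ℝ) :
    ⨆ γ2 : probSet U2, bayesCost c π γ1 γ2 = univ.sup' univ_nonempty (pureCost c π γ1) := by
  simp_rw [bayesCost_eq_sum_pureCost]
  exact ciSup_stdSimplex_sum_mul _

theorem sum_mul_bestReplyCost_le_bayesCost [Nonempty U1] {π : X → ℝ} (hπ : ∀ x, 0 ≤ π x)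
    {γ1 : X → U1 → ℝ} (hγ1 : γ1 ∈ prescSet X U1) (γ2 : U2 → ℝ) :
    ∑ x, π x * bestReplyCost c x γ2 ≤ bayesCost c π γ1 γ2 := by
  rw [bayesCost_eq_sum_mul_sum]
  exact sum_le_sum fun x _ =>
    mul_le_mul_of_nonneg_left (inf'_le_sum_mul_of_mem_stdSimplex (hγ1 x) _) (hπ x)

theorem ciInf_bayesCost [Nonempty U1] {π : X → ℝ} (hπ : ∀ x, 0 ≤ π x) (γ2 : U2 → ℝ) :
    ⨅ γ1 : prescSet X U1, bayesCost c π γ1 γ2 = ∑ x, π x * bestReplyCost c x γ2 := by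
  classical
  have hle γ1 := sum_mul_bestReplyCost_le_bayesCost c hπ (Subtype.prop γ1) γ2
  choose s hs using fun x => exists_mem_eq_inf' univ_nonempty fun u1 : U1 => ∑ u2, γ2 u2 * c x u1 u2
  refine le_antisymm ?_ (le_ciInf hle)
  refine ciInf_le_of_le ⟨_, Set.forall_mem_range.2 hle⟩
    ⟨fun x => Pi.single (s x) 1, fun x => single_mem_stdSimplex ℝ (s x)⟩ (le_of_eq ?_)
  simp [bayesCost_eq_sum_mul_sum, bestReplyCost, (hs _).2, Pi.single_apply]

theorem sum_mul_bestReplyCost_le [Nonempty U1] [Nonempty U2] {π : X → ℝ} (hπ : ∀ x, 0 ≤ π x)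
    {γ1 : X → U1 → ℝ} (hγ1 : γ1 ∈ prescSet X U1) {γ2 : U2 → ℝ} (hγ2 : γ2 ∈ probSet U2) :
    ∑ x, π x * bestReplyCost c x γ2 ≤ univ.sup' univ_nonempty (pureCost c π γ1) := by
  refine (sum_mul_bestReplyCost_le_bayesCost c hπ hγ1 γ2).trans ?_
  rw [bayesCost_eq_sum_pureCost]
  exact sum_mul_le_sup'_of_mem_stdSimplex hγ2 _

theorem ciInf_sup'_pureCost [Nonempty U1] [Nonempty U2] {π : X → ℝ} (hπ : ∀ x, 0 ≤ π x) :
    ⨅ γ1 : prescSet X U1, univ.sup' univ_nonempty (pureCost c π γ1) =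
      ⨆ γ2 : probSet U2, ∑ x, π x * bestReplyCost c x γ2 := by
  have hle (γ1 : prescSet X U1) (γ2 : probSet U2) := sum_mul_bestReplyCost_le c hπ γ1.2 γ2.2
  refine le_antisymm ?_ (ciSup_le fun γ2 => le_ciInf fun γ1 => hle γ1 γ2)
  set v := ⨅ γ1 : prescSet X U1, univ.sup' univ_nonempty (pureCost c π γ1)
  have hv : ∀ k ∈ pureCost c π '' prescSet X U1, ∃ u2, v ≤ k u2 := by
    rintro _ ⟨γ1, hγ1, rfl⟩
    have hbdd := Set.forall_mem_range.2 fun γ1 => hle γ1 (Classical.arbitrary _)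
    obtain ⟨u2, -, hu2⟩ := (le_sup'_iff _).1 (ciInf_le ⟨_, hbdd⟩ ⟨γ1, hγ1⟩)
    exact ⟨u2, hu2⟩
  obtain ⟨p, hp, hpv⟩ := exists_mem_stdSimplex_forall_le_sum_mul (convex_image_pureCost c π)
    ⟨_, Set.mem_image_of_mem _ (Classical.arbitrary (prescSet X U1)).2⟩ hv
  refine le_ciSup_of_le ⟨_, Set.forall_mem_range.2 (hle (Classical.arbitrary _))⟩ ⟨p, hp⟩ ?_
  rw [← ciInf_bayesCost c hπ]
  exact le_ciInf fun γ1 => (hpv _ ⟨γ1, γ1.2, rfl⟩).trans_eq (bayesCost_eq_sum_pureCost ..).symm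

theorem exists_finset_ciSup_sum_mul_bestReplyCost [Nonempty U1] [Nonempty U2] :
    ∃ (A : Finset (X → ℝ)) (hA : A.Nonempty), ∀ π ∈ probSet X,
      ⨆ γ2 : probSet U2, ∑ x, π x * bestReplyCost c x γ2 = A.sup' hA fun ℓ => ∑ x, ℓ x * π x := by
  obtain ⟨M, hM⟩ := Finite.exists_le fun i : X × U1 × U2 => |c i.1 i.2.1 i.2.2|
  have hcM x u1 u2 := abs_le.1 (hM (x, u1, u2))
  set Q := replyPolytope c M
  have hQ : IsCompact Q := isCompact_replyPolytope c fun x u1 u2 => (hcM x u1 u2).2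
  have hQne : Q.Nonempty :=
    ⟨_, mk_bestReplyCost_mem_replyPolytope c (fun x u1 u2 => (hcM x u1 u2).1)
      (Classical.arbitrary (probSet U2)).2⟩
  set V := (finite_extremePoints_replyPolytope c M).toFinset
  have hV : V.Nonempty := by
    obtain ⟨v, hv, -⟩ := hQ.exists_mem_extremePoints_isMaxOn hQne 0
    exact ⟨v, by simpa [V] using hv⟩
  refine ⟨V.image Prod.snd, hV.image _, fun π hπ => ?_⟩
  let obj : (U2 → ℝ) × (X → ℝ) →L[ℝ] ℝ :=
    (∑ x, π x • ContinuousLinearMap.proj x).comp (ContinuousLinearMap.snd ℝ _ _)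
  obtain ⟨v, hv, hvmax⟩ := hQ.exists_mem_extremePoints_isMaxOn hQne obj
  have hle (γ2 : probSet U2) : ∑ x, π x * bestReplyCost c x γ2 ≤ ∑ x, v.2 x * π x := by
    simpa [obj, mul_comm] using
      hvmax (mk_bestReplyCost_mem_replyPolytope c (fun x u1 u2 => (hcM x u1 u2).1) γ2.2)
  refine le_antisymm (ciSup_le fun γ2 => (hle γ2).trans ?_) (sup'_le _ _ fun ℓ hℓ => ?_)
  · exact le_sup' (fun ℓ : X → ℝ => ∑ x, ℓ x * π x)
      (mem_image_of_mem Prod.snd (by simpa [V] using hv))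
  obtain ⟨z, hz, rfl⟩ := mem_image.1 hℓ
  have hzQ : z ∈ Q := extremePoints_subset (by simpa [V] using hz)
  calc ∑ x, z.2 x * π x ≤ ∑ x, π x * bestReplyCost c x z.1 :=
        sum_le_sum fun x _ => by
          rw [mul_comm]
          exact mul_le_mul_of_nonneg_left (le_inf' _ _ fun u1 _ => hzQ.2.1 x u1) (hπ.1 x)
    _ ≤ ⨆ γ2 : probSet U2, ∑ x, π x * bestReplyCost c x γ2 :=
        le_ciSup (f := fun γ2 : probSet U2 => ∑ x, π x * bestReplyCost c x γ2)
          ⟨_, Set.forall_mem_range.2 hle⟩ ⟨z.1, hzQ.1⟩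

end Game

theorem stmt_12_general {X U1 U2 : Type*} [Fintype X] [Fintype U1] [Fintype U2]
    [Nonempty U1] [Nonempty U2]
    (c : X → U1 → U2 → ℝ) :
    ∃ (A : Finset (X → ℝ)) (hA : A.Nonempty),
      ∀ π ∈ probSet X,
        ((⨅ γ1 : prescSet X U1, ⨆ γ2 : probSet U2, bayesCost c π γ1 γ2) =
          ⨆ γ2 : probSet U2, ⨅ γ1 : prescSet X U1, bayesCost c π γ1 γ2) ∧
        ((⨅ γ1 : prescSet X U1, ⨆ γ2 : probSet U2, bayesCost c π γ1 γ2) =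
          A.sup' hA fun ℓ => ∑ x, ℓ x * π x) := by
  obtain ⟨A, hA, hAval⟩ := exists_finset_ciSup_sum_mul_bestReplyCost c
  refine ⟨A, hA, fun π hπ => ?_⟩
  have hupper : (⨅ γ1 : prescSet X U1, ⨆ γ2 : probSet U2, bayesCost c π γ1 γ2) =
      ⨆ γ2 : probSet U2, ∑ x, π x * bestReplyCost c x γ2 := by
    simp_rw [ciSup_bayesCost]
    exact ciInf_sup'_pureCost c hπ.1
  have hlower : (⨆ γ2 : probSet U2, ⨅ γ1 : prescSet X U1, bayesCost c π γ1 γ2) =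
      ⨆ γ2 : probSet U2, ∑ x, π x * bestReplyCost c x γ2 := by
    simp_rw [ciInf_bayesCost c hπ.1]
  exact ⟨hupper.trans hlower.symm, hupper.trans (hAval π hπ)⟩

/-- The stage Bayesian zero-sum game (minimizer observes `x ~ π` and picks
`γ1 : X → Δ(U1)`, maximizer picks `γ2 ∈ Δ(U2)`) has a value, and the value is a
piecewise linear convex function of `π`: a maximum of finitely many linear
functions of `π`. -/
theorem stmt_12 {X U1 U2 : Type*} [Fintype X] [Fintype U1] [Fintype U2]
    [Nonempty X] [Nonempty U1] [Nonempty U2]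
    (c : X → U1 → U2 → ℝ) :
    ∃ (A : Finset (X → ℝ)) (hA : A.Nonempty),
      ∀ π ∈ probSet X,
        ((⨅ γ1 : prescSet X U1, ⨆ γ2 : probSet U2, bayesCost c π γ1 γ2) =
          ⨆ γ2 : probSet U2, ⨅ γ1 : prescSet X U1, bayesCost c π γ1 γ2) ∧
        ((⨅ γ1 : prescSet X U1, ⨆ γ2 : probSet U2, bayesCost c π γ1 γ2) =
          A.sup' hA fun ℓ => ∑ x, ℓ x * π x) :=
  stmt_12_general c
end

section
/- Let w(π, γ1, γ2) = Σ_{u∈U} γ2(u) max_{d∈D(u)} ⟨d, π⊗γ1⟩ where (π⊗γ1)(x,u1) = π(x)γ1(x)(u1), D(u) finite sets of vectors in ℝ^{X×U1}, γ1 ∈ B1 = maps X → Δ(U1), γ2 ∈ Δ(U). Then max_{γ2} min_{γ1} w(π, γ1, γ2) equals the optimal value of the linear program: maximize Σ_x π(x)ν(x) over joint distributions r ∈ Δ(U × ∪_u D(u)) supported on pairs (u,d) with d ∈ D(u), and ν ∈ ℝ^X, subject to Σ_{u,d} r(u,d) d(x, u1) ≥ ν(x) for all x ∈ X, u1 ∈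 U1. -/
private def pay {X U1 : Type*} [Fintype X] [Fintype U1] (π : X → ℝ)
    (d : X × U1 → ℝ) (γ : X → U1 → ℝ) : ℝ :=
  ∑ x, ∑ u1, d (x, u1) * π x * γ x u1

private lemma key_sum {X U1 U : Type*} [Fintype X] [Fintype U1] [Fintype U]
    (π : X → ℝ) (T : Finset (X × U1 → ℝ)) (ρ : U → (X × U1 → ℝ) → ℝ)
    (γ : X → U1 → ℝ) :
    ∑ u, ∑ d ∈ T, ρ u d * pay π d γ
      = ∑ x, π x * ∑ u1, γ x u1 * ∑ u, ∑ d ∈ T, ρ u d * d (x, u1) := by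
  have h : ∀ u : U, ∀ d : X × U1 → ℝ, ρ u d * pay π d γ
      = ∑ x, ∑ u1, ρ u d * d (x, u1) * π x * γ x u1 := by
    intro u d
    simp only [pay, Finset.mul_sum]
    exact Finset.sum_congr rfl fun x _ => Finset.sum_congr rfl fun u1 _ => by ring
  calc ∑ u, ∑ d ∈ T, ρ u d * pay π d γ
      = ∑ u, ∑ d ∈ T, ∑ x, ∑ u1, ρ u d * d (x, u1) * π x * γ x u1 :=
        Finset.sum_congr rfl fun u _ => Finset.sum_congr rfl fun d _ => h u d
    _ = ∑ u, ∑ x, ∑ d ∈ T, ∑ u1, ρ u d * d (x, u1) * π x * γ x u1 :=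
        Finset.sum_congr rfl fun u _ => Finset.sum_comm
    _ = ∑ x, ∑ u, ∑ d ∈ T, ∑ u1, ρ u d * d (x, u1) * π x * γ x u1 := Finset.sum_comm
    _ = ∑ x, ∑ u, ∑ u1, ∑ d ∈ T, ρ u d * d (x, u1) * π x * γ x u1 :=
        Finset.sum_congr rfl fun x _ => Finset.sum_congr rfl fun u _ => Finset.sum_comm
    _ = ∑ x, ∑ u1, ∑ u, ∑ d ∈ T, ρ u d * d (x, u1) * π x * γ x u1 :=
        Finset.sum_congr rfl fun x _ => Finset.sum_comm
    _ = ∑ x, π x * ∑ u1, γ x u1 * ∑ u, ∑ d ∈ T, ρ u d * d (x, u1) := by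
        simp only [Finset.mul_sum]
        refine Finset.sum_congr rfl fun x _ => Finset.sum_congr rfl fun u1 _ =>
          Finset.sum_congr rfl fun u _ => Finset.sum_congr rfl fun d _ => by ring

private lemma abs_pay_le {X U1 : Type*} [Fintype X] [Fintype U1]
    (π : X → ℝ) (hπ : π ∈ probSet X) (d : X × U1 → ℝ) (γ : X → U1 → ℝ)
    (hγ : γ ∈ prescSet X U1) :
    |pay π d γ| ≤ ∑ x, ∑ u1, |d (x, u1)| := by
  refine (Finset.abs_sum_le_sum_abs _ _).trans (Finset.sum_le_sum fun x _ => ?_)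
  refine (Finset.abs_sum_le_sum_abs _ _).trans (Finset.sum_le_sum fun u1 _ => ?_)
  have hπx0 : 0 ≤ π x := hπ.1 x
  have hπx1 : π x ≤ 1 := by
    rw [← hπ.2]
    exact Finset.single_le_sum (fun i _ => hπ.1 i) (Finset.mem_univ x)
  have hγ0 : 0 ≤ γ x u1 := (hγ x).1 u1
  have hγ1 : γ x u1 ≤ 1 := by
    rw [← (hγ x).2]
    exact Finset.single_le_sum (fun i _ => (hγ x).1 i) (Finset.mem_univ u1)
  rw [abs_mul, abs_mul, abs_of_nonneg hπx0, abs_of_nonneg hγ0, mul_assoc]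
  exact mul_le_of_le_one_right (abs_nonneg _) (mul_le_one₀ hπx1 hγ0 hγ1)

private lemma minimax_aux {I F : Type*} [Fintype I] [Nonempty I]
    [AddCommGroup F] [Module ℝ F] {K : Set F} (hK : K.Nonempty) (hKc : Convex ℝ K)
    (g : I → F → ℝ) (hg : ∀ i, ConvexOn ℝ K (g i)) (v : ℝ)
    (hv : ∀ k ∈ K, v ≤ Finset.univ.sup' Finset.univ_nonempty fun i => g i k) :
    ∃ p : I → ℝ, (∀ i, 0 ≤ p i) ∧ ∑ i, p i = 1 ∧
      ∀ k ∈ K, v ≤ ∑ i, p i * g i k := by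
  classical
  set O : Set (I → ℝ) := {y | ∀ i, y i < v} with hOdef
  set C : Set (I → ℝ) := {y | ∃ k ∈ K, ∀ i, g i k ≤ y i} with hCdef
  have hOopen : IsOpen O := by
    have : O = ⋂ i, {y : I → ℝ | y i < v} := by
      ext y; simp [hOdef, Set.mem_iInter]
    rw [this]
    exact isOpen_iInter_of_finite fun i =>
      isOpen_lt (continuous_apply i) continuous_const
  have hOconv : Convex ℝ O := by
    have : O = ⋂ i, (LinearMap.proj (R := ℝ) (φ := fun _ : I => ℝ) i) ⁻¹' Set.Iio v := by
      ext y; simp [hOdef, Set.mem_iInter]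
    rw [this]
    exact convex_iInter fun i => (convex_Iio v).linear_preimage _
  have hCconv : Convex ℝ C := by
    rintro y ⟨k, hk, hky⟩ z ⟨k', hk', hkz⟩ a b ha hb hab
    refine ⟨a • k + b • k', hKc hk hk' ha hb hab, fun i => ?_⟩
    calc g i (a • k + b • k') ≤ a • g i k + b • g i k' := (hg i).2 hk hk' ha hb hab
      _ ≤ a * y i + b * z i := by
          simp only [smul_eq_mul]
          gcongr <;> [exact hky i; exact hkz i]
      _ = (a • y + b • z) i := by simp
  have hdisj : Disjoint O C := by
    rw [Set.disjoint_left]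
    rintro y hy ⟨k, hk, hky⟩
    have h1 := hv k hk
    have h2 : (Finset.univ.sup' Finset.univ_nonempty fun i => g i k) < v := by
      rw [Finset.sup'_lt_iff]
      exact fun i _ => lt_of_le_of_lt (hky i) (hy i)
    linarith
  obtain ⟨f, u, hfO, hfC⟩ := geometric_hahn_banach_open hOconv hOopen hCconv hdisj
  set q : I → ℝ := fun i => f (Pi.single i 1) with hqdef
  have hfy : ∀ y : I → ℝ, f y = ∑ i, y i * q i := by
    intro y
    have hy : y = ∑ i, y i • (Pi.single i (1 : ℝ) : I → ℝ) := by
      funext j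
      simp [Pi.single_apply, Finset.sum_apply]
    conv_lhs => rw [hy]
    rw [map_sum]
    exact Finset.sum_congr rfl fun i _ => by rw [map_smul, smul_eq_mul]
  have hc0 : (fun _ : I => v - 1) ∈ O := fun i => by show v - 1 < v; linarith
  have hq0 : ∀ i, 0 ≤ q i := by
    intro i
    by_contra hqi
    push_neg at hqi
    set t : ℝ := (u - f (fun _ : I => v - 1) + 1) / (-q i) with htdef
    have hfc : f (fun _ : I => v - 1) < u := hfO _ hc0
    have ht : 0 < t := div_pos (by linarith) (by linarith)
    have hmem : ((fun _ : I => v - 1) - t • (Pi.single i (1:ℝ) : I → ℝ)) ∈ O := by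
      intro j
      have : (0:ℝ) ≤ t * (Pi.single i (1:ℝ) : I → ℝ) j := by
        rcases eq_or_ne j i with rfl | h
        · simp [ht.le]
        · simp [Pi.single_apply, h]
      simp only [Pi.sub_apply, Pi.smul_apply, smul_eq_mul]
      linarith
    have hlt := hfO _ hmem
    rw [map_sub, map_smul, smul_eq_mul] at hlt
    have hqe : f (Pi.single i 1) = q i := rfl
    rw [hqe] at hlt
    have h4 : t * q i = -(u - f (fun _ : I => v - 1) + 1) := by
      rw [htdef]
      field_simp [hqi.ne]
    linarith
  have hCne : (fun i => g i hK.choose) ∈ C := ⟨hK.choose, hK.choose_spec, fun i => le_rfl⟩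
  set s : ℝ := ∑ i, q i with hsdef
  have hs0 : 0 ≤ s := Finset.sum_nonneg fun i _ => hq0 i
  have hs : 0 < s := by
    rcases hs0.lt_or_eq with h | h
    · exact h
    · exfalso
      have hall : ∀ i ∈ Finset.univ, q i = 0 :=
        (Finset.sum_eq_zero_iff_of_nonneg fun i _ => hq0 i).1 h.symm
      have hzero : ∀ y : I → ℝ, f y = 0 := by
        intro y; rw [hfy]
        exact Finset.sum_eq_zero fun i _ => by rw [hall i (Finset.mem_univ i), mul_zero]
      have h1 := hfO _ hc0
      have h2 := hfC _ hCne
      rw [hzero] at h1 h2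
      linarith
  have hvs : v * s ≤ u := by
    by_contra h
    push_neg at h
    set ε : ℝ := (v * s - u) / s with hεdef
    have hε : 0 < ε := div_pos (by linarith) hs
    have hmem : (fun _ : I => v - ε) ∈ O := fun i => by show v - ε < v; linarith
    have h1 := hfO _ hmem
    rw [hfy] at h1
    have h3 : (v - ε) * s < u := by rw [hsdef, Finset.mul_sum]; exact h1
    have hεs : ε * s = v * s - u := by rw [hεdef, div_mul_cancel₀ _ hs.ne']
    nlinarith
  refine ⟨fun i => q i / s, fun i => div_nonneg (hq0 i) hs.le, ?_, ?_⟩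
  · rw [← Finset.sum_div, ← hsdef, div_self hs.ne']
  · intro k hk
    have hmem : (fun i => g i k) ∈ C := ⟨k, hk, fun i => le_rfl⟩
    have h1 := hfC _ hmem
    rw [hfy] at h1
    calc v = v * s / s := by rw [mul_div_cancel_right₀ _ hs.ne']
      _ ≤ u / s := (div_le_div_iff_of_pos_right hs).2 hvs
      _ ≤ (∑ i, g i k * q i) / s := (div_le_div_iff_of_pos_right hs).2 h1
      _ = ∑ i, q i / s * g i k := by
          rw [Finset.sum_div]
          exact Finset.sum_congr rfl fun i _ => by ring

set_option maxHeartbeats 2000000 in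
/-- LP characterization (à la Ponssard–Sorin) of the max-min value of the stage
game: for `w(π,γ1,γ2) = Σ_u γ2(u) max_{d ∈ D(u)} ⟨d, π ⊗ γ1⟩`,
`max_{γ2 ∈ Δ(U)} min_{γ1} w(π,γ1,γ2)` equals the optimal value of the LP
maximizing `Σ_x π(x) ν(x)` over joint distributions `r` on `U × ∪_u D(u)`
supported on pairs `(u, d)` with `d ∈ D(u)` and `ν ∈ ℝ^X`, subject to
`Σ_{u,d} r(u,d) d(x,u1) ≥ ν(x)` for all `x, u1`. -/
theorem stmt_19 {X U1 U : Type*}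
    [Fintype X] [Fintype U1] [Fintype U] [Nonempty X] [Nonempty U1] [Nonempty U]
    [DecidableEq (X × U1 → ℝ)]
    (D : U → Finset (X × U1 → ℝ)) (hD : ∀ u, (D u).Nonempty)
    (π : X → ℝ) (hπ : π ∈ probSet X) :
    (⨆ γ2 : probSet U, ⨅ γ1 : prescSet X U1,
        ∑ u, γ2.1 u *
          (D u).sup' (hD u) fun d => ∑ x, ∑ u1, d (x, u1) * π x * γ1.1 x u1) =
      sSup {v : ℝ |
        ∃ (r : U × (X × U1 → ℝ) → ℝ) (ν : X → ℝ),
          (∀ p, 0 ≤ r p) ∧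
          (∑ u, ∑ d ∈ Finset.univ.biUnion D, r (u, d)) = 1 ∧
          (∀ u, ∀ d ∉ D u, r (u, d) = 0) ∧
          (∀ (x : X) (u1 : U1),
            ν x ≤ ∑ u, ∑ d ∈ Finset.univ.biUnion D, r (u, d) * d (x, u1)) ∧
          v = ∑ x, π x * ν x} := by
  classical
  obtain ⟨hπ0, hπs⟩ := hπ
  have hcU : (0:ℝ) < Fintype.card U := by exact_mod_cast Fintype.card_pos
  have hcU1 : (0:ℝ) < Fintype.card U1 := by exact_mod_cast Fintype.card_pos
  haveI hP : Nonempty ↥(probSet U) := ⟨⟨fun _ => (Fintype.card U : ℝ)⁻¹,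
    fun _ => inv_nonneg.2 hcU.le,
    by rw [Finset.sum_const, Finset.card_univ, nsmul_eq_mul, mul_inv_cancel₀ hcU.ne']⟩⟩
  haveI hQ : Nonempty ↥(prescSet X U1) := ⟨⟨fun _ _ => (Fintype.card U1 : ℝ)⁻¹,
    fun _ => ⟨fun _ => inv_nonneg.2 hcU1.le,
      by rw [Finset.sum_const, Finset.card_univ, nsmul_eq_mul, mul_inv_cancel₀ hcU1.ne']⟩⟩⟩
  set T : Finset (X × U1 → ℝ) := Finset.univ.biUnion D with hTdef
  set B : ℝ := ∑ d ∈ T, ∑ x, ∑ u1, |d (x, u1)| with hBdef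
  have hdT : ∀ u, ∀ d ∈ D u, d ∈ T := fun u d hd =>
    Finset.mem_biUnion.2 ⟨u, Finset.mem_univ u, hd⟩
  have habsB : ∀ d ∈ T, (∑ x, ∑ u1, |d (x, u1)|) ≤ B := fun d hd =>
    Finset.single_le_sum (f := fun d => ∑ x, ∑ u1, |d (x, u1)|)
      (fun d' _ => Finset.sum_nonneg fun x _ => Finset.sum_nonneg fun u1 _ => abs_nonneg _) hd
  have hpayB : ∀ d ∈ T, ∀ γ ∈ prescSet X U1, |pay π d γ| ≤ B := fun d hd γ hγ =>
    (abs_pay_le π ⟨hπ0, hπs⟩ d γ hγ).trans (habsB d hd)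
  have hdB : ∀ d ∈ T, ∀ x u1, |d (x, u1)| ≤ B := by
    intro d hd x u1
    refine le_trans ?_ (habsB d hd)
    calc |d (x, u1)| ≤ ∑ u1', |d (x, u1')| :=
          Finset.single_le_sum (f := fun u1' => |d (x, u1')|)
            (fun _ _ => abs_nonneg _) (Finset.mem_univ u1)
      _ ≤ ∑ x', ∑ u1', |d (x', u1')| :=
          Finset.single_le_sum (f := fun x' => ∑ u1', |d (x', u1')|)
            (fun _ _ => Finset.sum_nonneg fun _ _ => abs_nonneg _) (Finset.mem_univ x)
  have hKconv : Convex ℝ (prescSet X U1) := by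
    intro a ha b hb s t hs ht hst
    refine fun x => ⟨fun u => ?_, ?_⟩
    · simp only [Pi.add_apply, Pi.smul_apply, smul_eq_mul]
      exact add_nonneg (mul_nonneg hs ((ha x).1 u)) (mul_nonneg ht ((hb x).1 u))
    · simp only [Pi.add_apply, Pi.smul_apply, smul_eq_mul]
      rw [Finset.sum_add_distrib, ← Finset.mul_sum, ← Finset.mul_sum, (ha x).2, (hb x).2]
      linarith
  have hKne : (prescSet X U1).Nonempty := ⟨_, hQ.some.2⟩
  have hlin : ∀ (d : X × U1 → ℝ) (s t : ℝ) (γ γ' : X → U1 → ℝ),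
      pay π d (s • γ + t • γ') = s * pay π d γ + t * pay π d γ' := by
    intro d s t γ γ'
    simp only [pay, Finset.mul_sum, ← Finset.sum_add_distrib]
    refine Finset.sum_congr rfl fun x _ => Finset.sum_congr rfl fun u1 _ => ?_
    simp only [Pi.add_apply, Pi.smul_apply, smul_eq_mul]
    ring
  haveI hI2 : Nonempty ((u : U) × {d // d ∈ D u}) :=
    ⟨⟨Classical.arbitrary U, ⟨(hD _).choose, (hD _).choose_spec⟩⟩⟩
  set G : (X → U1 → ℝ) → ℝ := fun γ =>
    Finset.univ.sup' Finset.univ_nonempty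
      (fun i : (u : U) × {d // d ∈ D u} => pay π i.2.1 γ) with hGdef
  have hGub : ∀ γ ∈ prescSet X U1, G γ ≤ B := fun γ hγ =>
    Finset.sup'_le _ _ fun i _ => (abs_le.1 (hpayB i.2.1 (hdT i.1 i.2.1 i.2.2) γ hγ)).2
  have hGlb : ∀ γ ∈ prescSet X U1, -B ≤ G γ := by
    intro γ hγ
    obtain ⟨i0⟩ := hI2
    exact le_trans (abs_le.1 (hpayB i0.2.1 (hdT i0.1 i0.2.1 i0.2.2) γ hγ)).1
      (Finset.le_sup' (fun i : (u : U) × {d // d ∈ D u} => pay π i.2.1 γ)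
        (Finset.mem_univ i0))
  set v : ℝ := ⨅ γ1 : prescSet X U1, G γ1.1 with hvdef
  have hbbG : BddBelow (Set.range fun γ1 : prescSet X U1 => G γ1.1) :=
    ⟨-B, by rintro _ ⟨γ1, rfl⟩; exact hGlb γ1.1 γ1.2⟩
  have hvle : ∀ k ∈ prescSet X U1, v ≤ G k := fun k hk => ciInf_le hbbG ⟨k, hk⟩
  obtain ⟨p, hp0, hp1, hpK⟩ := minimax_aux hKne hKconv
      (fun (i : (u : U) × {d // d ∈ D u}) (γ : X → U1 → ℝ) => pay π i.2.1 γ)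
      (fun i => ⟨hKconv, fun γ hγ γ' hγ' s t hs ht hst => by
        rw [smul_eq_mul, smul_eq_mul]; exact le_of_eq (hlin _ _ _ _ _)⟩)
      v hvle
  set r : U × (X × U1 → ℝ) → ℝ :=
    fun ud => if h : ud.2 ∈ D ud.1 then p ⟨ud.1, ⟨ud.2, h⟩⟩ else 0 with hrdef
  have hr0 : ∀ q, 0 ≤ r q := by
    intro q
    rw [hrdef]
    dsimp only
    split
    · exact hp0 _
    · exact le_rfl
  have hrD : ∀ u, ∀ d, d ∉ D u → r (u, d) = 0 := by
    intro u d hd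
    rw [hrdef]
    exact dif_neg hd
  have hsig : ∀ h : U → (X × U1 → ℝ) → ℝ,
      (∑ i : (u : U) × {d // d ∈ D u}, p i * h i.1 i.2.1)
        = ∑ u, ∑ d ∈ T, r (u, d) * h u d := by
    intro h
    rw [← Finset.univ_sigma_univ, Finset.sum_sigma]
    refine Finset.sum_congr rfl fun u _ => ?_
    rw [← Finset.sum_subset (fun d hd => hdT u d hd)
      (fun d _ hd => by rw [hrD u d hd, zero_mul])]
    rw [← Finset.sum_attach (D u) (fun d => r (u, d) * h u d)]
    rw [Finset.univ_eq_attach]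
    refine Finset.sum_congr rfl fun x _ => ?_
    congr 1
    rw [hrdef]
    dsimp only
    rw [dif_pos x.2]
  have hr1 : (∑ u, ∑ d ∈ T, r (u, d)) = 1 := by
    have h := hsig (fun _ _ => 1)
    simp only [mul_one] at h
    rw [← h, hp1]
  set c : X → U1 → ℝ := fun x u1 => ∑ u, ∑ d ∈ T, r (u, d) * d (x, u1) with hcdef
  have hνmin : ∀ x, ∃ u1,
      (Finset.univ.inf' Finset.univ_nonempty fun u1 => c x u1) = c x u1 := by
    intro x
    obtain ⟨u1, _, h⟩ := Finset.exists_mem_eq_inf' Finset.univ_nonempty fun u1 => c x u1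
    exact ⟨u1, h⟩
  choose m hm using hνmin
  set ν : X → ℝ := fun x => Finset.univ.inf' Finset.univ_nonempty fun u1 => c x u1 with hνdef
  set γstar : X → U1 → ℝ := fun x u1 => if u1 = m x then 1 else 0 with hγstardef
  have hγstar : γstar ∈ prescSet X U1 := by
    intro x
    constructor
    · intro u1
      rw [hγstardef]
      dsimp only
      split <;> norm_num
    · rw [hγstardef]
      simp [Finset.sum_ite_eq']
  have hval : v ≤ ∑ x, π x * ν x := by
    have h1 : v ≤ ∑ i : (u : U) × {d // d ∈ D u}, p i * pay π i.2.1 γstar := hpK _ hγstar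
    calc v ≤ ∑ i : (u : U) × {d // d ∈ D u}, p i * pay π i.2.1 γstar := h1
      _ = ∑ u, ∑ d ∈ T, r (u, d) * pay π d γstar := hsig fun _ d => pay π d γstar
      _ = ∑ x, π x * ∑ u1, γstar x u1 * c x u1 :=
          key_sum π T (fun u d => r (u, d)) γstar
      _ = ∑ x, π x * c x (m x) := by
          refine Finset.sum_congr rfl fun x _ => ?_
          congr 1
          rw [hγstardef]
          simp [ite_mul, Finset.sum_ite_eq']
      _ = ∑ x, π x * ν x := by
          refine Finset.sum_congr rfl fun x _ => ?_
          rw [hνdef]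
          dsimp only
          rw [hm x]
  have hmemS : (∑ x, π x * ν x) ∈ {v : ℝ |
      ∃ (r : U × (X × U1 → ℝ) → ℝ) (ν : X → ℝ),
        (∀ p, 0 ≤ r p) ∧
        (∑ u, ∑ d ∈ T, r (u, d)) = 1 ∧
        (∀ u, ∀ d ∉ D u, r (u, d) = 0) ∧
        (∀ (x : X) (u1 : U1), ν x ≤ ∑ u, ∑ d ∈ T, r (u, d) * d (x, u1)) ∧
        v = ∑ x, π x * ν x} := by
    refine ⟨r, ν, hr0, hr1, hrD, fun x u1 => ?_, rfl⟩
    exact Finset.inf'_le _ (Finset.mem_univ u1)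
  have hSbdd : BddAbove {v : ℝ |
      ∃ (r : U × (X × U1 → ℝ) → ℝ) (ν : X → ℝ),
        (∀ p, 0 ≤ r p) ∧
        (∑ u, ∑ d ∈ T, r (u, d)) = 1 ∧
        (∀ u, ∀ d ∉ D u, r (u, d) = 0) ∧
        (∀ (x : X) (u1 : U1), ν x ≤ ∑ u, ∑ d ∈ T, r (u, d) * d (x, u1)) ∧
        v = ∑ x, π x * ν x} := by
    refine ⟨B, ?_⟩
    rintro b ⟨r', ν', hr'0, hr'1, hr'D, hcons, rfl⟩
    have hν'B : ∀ x, ν' x ≤ B := by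
      intro x
      obtain ⟨u1⟩ := (inferInstance : Nonempty U1)
      refine (hcons x u1).trans ?_
      calc ∑ u, ∑ d ∈ T, r' (u, d) * d (x, u1)
          ≤ ∑ u, ∑ d ∈ T, r' (u, d) * B := by
            refine Finset.sum_le_sum fun u _ => Finset.sum_le_sum fun d hd => ?_
            exact mul_le_mul_of_nonneg_left
              ((le_abs_self _).trans (hdB d hd x u1)) (hr'0 _)
        _ = B := by
            simp only [← Finset.sum_mul]
            rw [hr'1, one_mul]
    calc ∑ x, π x * ν' x ≤ ∑ x, π x * B :=
          Finset.sum_le_sum fun x _ => mul_le_mul_of_nonneg_left (hν'B x) (hπ0 x)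
      _ = B := by rw [← Finset.sum_mul, hπs, one_mul]
  have hWle : ∀ γ2 : probSet U, ∀ γ1 : prescSet X U1,
      (∑ u, γ2.1 u * (D u).sup' (hD u) fun d => pay π d γ1.1) ≤ G γ1.1 := by
    intro γ2 γ1
    calc ∑ u, γ2.1 u * ((D u).sup' (hD u) fun d => pay π d γ1.1)
        ≤ ∑ u, γ2.1 u * G γ1.1 := by
          refine Finset.sum_le_sum fun u _ => mul_le_mul_of_nonneg_left ?_ (γ2.2.1 u)
          exact Finset.sup'_le _ _ fun d hd =>
            Finset.le_sup' (fun i : (u : U) × {d // d ∈ D u} => pay π i.2.1 γ1.1)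
              (Finset.mem_univ ⟨u, ⟨d, hd⟩⟩)
      _ = G γ1.1 := by rw [← Finset.sum_mul, γ2.2.2, one_mul]
  have hWlb : ∀ γ2 : probSet U, ∀ γ1 : prescSet X U1,
      -B ≤ ∑ u, γ2.1 u * (D u).sup' (hD u) fun d => pay π d γ1.1 := by
    intro γ2 γ1
    calc -B = ∑ u, γ2.1 u * (-B) := by rw [← Finset.sum_mul, γ2.2.2, one_mul]
      _ ≤ ∑ u, γ2.1 u * (D u).sup' (hD u) fun d => pay π d γ1.1 := by
          refine Finset.sum_le_sum fun u _ => mul_le_mul_of_nonneg_left ?_ (γ2.2.1 u)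
          refine le_trans ?_ (Finset.le_sup' _ (hD u).choose_spec)
          exact (abs_le.1 (hpayB (hD u).choose (hdT u _ (hD u).choose_spec) γ1.1 γ1.2)).1
  have hWub : ∀ γ2 : probSet U, ∀ γ1 : prescSet X U1,
      (∑ u, γ2.1 u * (D u).sup' (hD u) fun d => pay π d γ1.1) ≤ B := by
    intro γ2 γ1
    calc ∑ u, γ2.1 u * ((D u).sup' (hD u) fun d => pay π d γ1.1)
        ≤ ∑ u, γ2.1 u * B := by
          refine Finset.sum_le_sum fun u _ => mul_le_mul_of_nonneg_left ?_ (γ2.2.1 u)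
          exact Finset.sup'_le _ _ fun d hd =>
            (abs_le.1 (hpayB d (hdT u d hd) γ1.1 γ1.2)).2
      _ = B := by rw [← Finset.sum_mul, γ2.2.2, one_mul]
  refine le_antisymm ?_ ?_
  · have h1 : ∀ γ2 : probSet U,
        (⨅ γ1 : prescSet X U1, ∑ u, γ2.1 u *
          (D u).sup' (hD u) fun d => ∑ x, ∑ u1, d (x, u1) * π x * γ1.1 x u1) ≤ v := by
      intro γ2
      rw [hvdef]
      refine le_ciInf fun γ1 => ?_
      refine le_trans (ciInf_le ⟨-B, ?_⟩ γ1) (hWle γ2 γ1)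
      rintro _ ⟨γ1', rfl⟩
      exact hWlb γ2 γ1'
    exact (ciSup_le h1).trans (hval.trans (le_csSup hSbdd hmemS))
  · refine csSup_le ⟨_, hmemS⟩ ?_
    rintro b ⟨r', ν', hr'0, hr'1, hr'D, hcons, rfl⟩
    have hγ2mem : (fun u => ∑ d ∈ T, r' (u, d)) ∈ probSet U :=
      ⟨fun u => Finset.sum_nonneg fun d _ => hr'0 _, hr'1⟩
    have hlow : ∀ γ1 : prescSet X U1,
        (∑ x, π x * ν' x) ≤ ∑ u, (∑ d ∈ T, r' (u, d)) *
          (D u).sup' (hD u) fun d => ∑ x, ∑ u1, d (x, u1) * π x * γ1.1 x u1 := by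
      intro γ1
      show (∑ x, π x * ν' x) ≤ ∑ u, (∑ d ∈ T, r' (u, d)) *
          (D u).sup' (hD u) fun d => pay π d γ1.1
      calc ∑ x, π x * ν' x
          ≤ ∑ x, π x * ∑ u1, γ1.1 x u1 * ∑ u, ∑ d ∈ T, r' (u, d) * d (x, u1) := by
            refine Finset.sum_le_sum fun x _ => mul_le_mul_of_nonneg_left ?_ (hπ0 x)
            calc ν' x = ∑ u1, γ1.1 x u1 * ν' x := by
                  rw [← Finset.sum_mul, (γ1.2 x).2, one_mul]
              _ ≤ ∑ u1, γ1.1 x u1 * ∑ u, ∑ d ∈ T, r' (u, d) * d (x, u1) :=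
                  Finset.sum_le_sum fun u1 _ =>
                    mul_le_mul_of_nonneg_left (hcons x u1) ((γ1.2 x).1 u1)
        _ = ∑ u, ∑ d ∈ T, r' (u, d) * pay π d γ1.1 :=
            (key_sum π T (fun u d => r' (u, d)) γ1.1).symm
        _ ≤ ∑ u, (∑ d ∈ T, r' (u, d)) * (D u).sup' (hD u) fun d => pay π d γ1.1 := by
            refine Finset.sum_le_sum fun u _ => ?_
            rw [Finset.sum_mul]
            refine Finset.sum_le_sum fun d hd => ?_
            by_cases hdu : d ∈ D u
            · exact mul_le_mul_of_nonneg_left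
                (Finset.le_sup' (fun d => pay π d γ1.1) hdu) (hr'0 _)
            · rw [hr'D u d hdu, zero_mul, zero_mul]
    refine le_trans (le_ciInf fun γ1 : prescSet X U1 => hlow γ1)
      (le_ciSup (f := fun γ2 : probSet U => ⨅ γ1 : prescSet X U1,
        ∑ u, γ2.1 u * (D u).sup' (hD u) fun d => ∑ x, ∑ u1, d (x, u1) * π x * γ1.1 x u1)
        ?_ (⟨_, hγ2mem⟩ : probSet U))
    refine ⟨B, ?_⟩
    rintro _ ⟨γ2', rfl⟩
    refine le_trans (ciInf_le ⟨-B, ?_⟩ hQ.some) (hWub γ2' hQ.some)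
    rintro _ ⟨γ1', rfl⟩
    exact hWlb γ2' γ1'
end
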